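/- arXiv:2503.11975 — 2 statements merged into one kernel-verified Lean document; each statement's English description precedes it below -/
import Mathlib

section
/- Let δ > 0 and let B be an m × m positive real matrix that is δ-bounded, i.e., for all i, j, k, B_{ij} ≤ δ·B_{ik} and B_{ij} ≤ δ·B_{kj}. For each i ∈ ℕ let U_i be a nonnegative m × m matrix. Then the intersection ⋂_{i=1}^∞ B U_1 B U_2 B ⋯ B U_i B (Λ^m), where Λ^m is the nonnegative cone of ℝ^m, is contained in a single ray, i.e., any two nonzero elements u, v of this intersection satisfy u = λv for some λ > 0. -/
/-!
A positive `δ`-bounded matrix `B` contracts the spread of coordinate ratios: if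
`a z' ≤ z ≤ b z'` coordinatewise, then the ratios `(Bz)ᵢ / (Bz')ᵢ` lie in a subinterval of
`[a, b]` of length at most `(δ² - 1)/(δ² + 1) · (b - a)`, while a nonnegative matrix `U` keeps
`a Uz' ≤ Uz ≤ b Uz'`.  Applied to arbitrary nonnegative vectors, `B` alone already confines the
ratios to some `[a, b]` with `b ≤ δ² a`.  Hence two vectors `u, v` of the intersection have all
ratios `uᵢ / vᵢ` within relative distance `(δ² - 1) ((δ² - 1)/(δ² + 1))ⁿ` of each other for
every `n`, so `u / v` is constant.
-/

/-- The iterated matrix product `B U_0 B U_1 B ⋯ B U_{n-1} B`: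
`veechProd B U 0 = B` and `veechProd B U (n+1) = (veechProd B U n) * U n * B`. -/
def veechProd {m : ℕ} (B : Matrix (Fin m) (Fin m) ℝ)
    (U : ℕ → Matrix (Fin m) (Fin m) ℝ) : ℕ → Matrix (Fin m) (Fin m) ℝ
  | 0 => B
  | n + 1 => veechProd B U n * U n * B

open Matrix Filter Topology

section NonnegMatrix

variable {ι κ : Type*} [Fintype κ] {B : Matrix ι κ ℝ} {x y : κ → ℝ} {δ : ℝ}

theorem mulVec_nonneg_of_nonneg (hB : ∀ i j, 0 ≤ B i j) (hx : 0 ≤ x) : 0 ≤ B *ᵥ x :=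
  fun i => dotProduct_nonneg_of_nonneg (hB i) hx

theorem mulVec_mono_of_nonneg (hB : ∀ i j, 0 ≤ B i j) (hxy : x ≤ y) : B *ᵥ x ≤ B *ᵥ y :=
  fun i => dotProduct_le_dotProduct_of_nonneg_left hxy (hB i)

theorem mulVec_apply_pos (hB : ∀ i j, 0 < B i j) (hx : 0 ≤ x) (hx0 : x ≠ 0) (i : ι) :
    0 < (B *ᵥ x) i := by
  obtain ⟨j, hj⟩ := Function.ne_iff.mp hx0
  exact Finset.sum_pos' (fun j _ => mul_nonneg (hB i j).le (hx j))
    ⟨j, Finset.mem_univ j, mul_pos (hB i j) ((hx j).lt_of_ne' hj)⟩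

theorem ne_zero_of_mulVec_ne_zero (h : B *ᵥ x ≠ 0) : x ≠ 0 := by
  rintro rfl
  exact h (mulVec_zero B)

theorem mulVec_apply_le_mul (hB : ∀ i j k, B i j ≤ δ * B k j) (hx : 0 ≤ x) (i k : ι) :
    (B *ᵥ x) i ≤ δ * (B *ᵥ x) k :=
  calc (B *ᵥ x) i = B i ⬝ᵥ x := rfl
    _ ≤ (δ • B k) ⬝ᵥ x := dotProduct_le_dotProduct_of_nonneg_right (fun j => hB i j k) hx
    _ = δ * (B *ᵥ x) k := smul_dotProduct δ (B k) x

theorem mulVec_div_mulVec_le (hB0 : ∀ i j, 0 ≤ B i j) (hB : ∀ i j k, B i j ≤ δ * B k j)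
    (hx : 0 ≤ x) (hy : 0 ≤ y) (hBy : ∀ i, 0 < (B *ᵥ y) i) (i k : ι) :
    (B *ᵥ x) i / (B *ᵥ y) i ≤ δ ^ 2 * ((B *ᵥ x) k / (B *ᵥ y) k) := by
  have hxik := mulVec_apply_le_mul hB hx i k
  rw [mul_div_assoc', div_le_div_iff₀ (hBy i) (hBy k)]
  calc (B *ᵥ x) i * (B *ᵥ y) k ≤ (δ * (B *ᵥ x) k) * (δ * (B *ᵥ y) i) :=
        mul_le_mul hxik (mulVec_apply_le_mul hB hy k i) (hBy k).le
          ((mulVec_nonneg_of_nonneg hB0 hx i).trans hxik)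
    _ = δ ^ 2 * (B *ᵥ x) k * (B *ᵥ y) i := by ring

end NonnegMatrix

/-- Division-free form of: the ratios `w i / w' i` lie in some `[a, b]` with `0 < a` and
`b - a ≤ ε a`. -/
def RatioSpreadLE {ι : Type*} (ε : ℝ) (w w' : ι → ℝ) : Prop :=
  ∃ a b : ℝ, 0 < a ∧ a • w' ≤ w ∧ w ≤ b • w' ∧ b - a ≤ ε * a

section RatioSpread

variable {ι : Type*} {ε : ℝ}

theorem RatioSpreadLE.mulVec_of_nonneg {κ : Type*} [Fintype κ] {U : Matrix ι κ ℝ}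
    (hU : ∀ i j, 0 ≤ U i j) {z z' : κ → ℝ} (h : RatioSpreadLE ε z z') :
    RatioSpreadLE ε (U *ᵥ z) (U *ᵥ z') := by
  obtain ⟨a, b, ha, hlow, hupp, hab⟩ := h
  refine ⟨a, b, ha, ?_, ?_, hab⟩
  · rw [← mulVec_smul]
    exact mulVec_mono_of_nonneg hU hlow
  · rw [← mulVec_smul]
    exact mulVec_mono_of_nonneg hU hupp

theorem ratioSpreadLE_of_forall_div_sub_div_le [Finite ι] [Nonempty ι] {w w' : ι → ℝ}
    (hw' : ∀ i, 0 < w' i) (hpos : ∀ i, 0 < w i / w' i)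
    (h : ∀ i k, w i / w' i - w k / w' k ≤ ε * (w k / w' k)) : RatioSpreadLE ε w w' := by
  obtain ⟨k, hk⟩ := Finite.exists_min fun j => w j / w' j
  obtain ⟨i, hi⟩ := Finite.exists_max fun j => w j / w' j
  exact ⟨w k / w' k, w i / w' i, hpos k, fun j => (le_div_iff₀ (hw' j)).mp (hk j),
    fun j => (div_le_iff₀ (hw' j)).mp (hi j), h i k⟩

variable [Fintype ι] {B : Matrix ι ι ℝ} {δ : ℝ} {z z' : ι → ℝ}

theorem ratioSpreadLE_mulVec (hB : ∀ i j, 0 < B i j) (hBδ : ∀ i j k, B i j ≤ δ * B k j)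
    (hz : 0 ≤ z) (hz' : 0 ≤ z') (hz0 : z ≠ 0) (hz'0 : z' ≠ 0) :
    RatioSpreadLE (δ ^ 2 - 1) (B *ᵥ z) (B *ᵥ z') := by
  have hBz' := mulVec_apply_pos hB hz' hz'0
  obtain ⟨j, -⟩ := Function.ne_iff.mp hz0
  have : Nonempty ι := ⟨j⟩
  refine ratioSpreadLE_of_forall_div_sub_div_le hBz'
    (fun i => div_pos (mulVec_apply_pos hB hz hz0 i) (hBz' i)) fun i k => ?_
  linarith [mulVec_div_mulVec_le (fun i j => (hB i j).le) hBδ hz hz' hBz' i k]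

theorem RatioSpreadLE.mulVec_contract (hδ : 1 ≤ δ) (hB : ∀ i j, 0 < B i j)
    (hBδ : ∀ i j k, B i j ≤ δ * B k j) (hε : 0 ≤ ε) (hz' : 0 ≤ z') (hz'0 : z' ≠ 0)
    (h : RatioSpreadLE ε z z') :
    RatioSpreadLE ((δ ^ 2 - 1) / (δ ^ 2 + 1) * ε) (B *ᵥ z) (B *ᵥ z') := by
  obtain ⟨a, b, ha, hlow, hupp, hab⟩ := h
  have hBz' := mulVec_apply_pos hB hz' hz'0
  set r := fun i => (B *ᵥ z) i / (B *ᵥ z') i with hr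
  have hlow_ratio : ∀ i, (B *ᵥ (z - a • z')) i / (B *ᵥ z') i = r i - a := fun i => by
    simp only [hr, mulVec_sub, mulVec_smul, Pi.sub_apply, Pi.smul_apply, smul_eq_mul, sub_div,
      mul_div_cancel_right₀ _ (hBz' i).ne']
  have hupp_ratio : ∀ i, (B *ᵥ (b • z' - z)) i / (B *ᵥ z') i = b - r i := fun i => by
    simp only [hr, mulVec_sub, mulVec_smul, Pi.sub_apply, Pi.smul_apply, smul_eq_mul, sub_div,
      mul_div_cancel_right₀ _ (hBz' i).ne']
  have hB0 : ∀ i j, 0 ≤ B i j := fun i j => (hB i j).le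
  have hlow' : ∀ i k, r i - a ≤ δ ^ 2 * (r k - a) := fun i k => by
    simpa only [hlow_ratio] using mulVec_div_mulVec_le hB0 hBδ (sub_nonneg.2 hlow) hz' hBz' i k
  have hupp' : ∀ i k, b - r i ≤ δ ^ 2 * (b - r k) := fun i k => by
    simpa only [hupp_ratio] using mulVec_div_mulVec_le hB0 hBδ (sub_nonneg.2 hupp) hz' hBz' i k
  have ha_le : ∀ k, a ≤ r k := fun k => by
    have := div_nonneg (mulVec_nonneg_of_nonneg hB0 (sub_nonneg.2 hlow) k) (hBz' k).le
    rw [hlow_ratio] at this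
    linarith
  obtain ⟨j, -⟩ := Function.ne_iff.mp hz'0
  have : Nonempty ι := ⟨j⟩
  refine ratioSpreadLE_of_forall_div_sub_div_le hBz' (fun k => ha.trans_le (ha_le k))
    fun i k => ?_
  have hδ2 : 0 ≤ δ ^ 2 - 1 := by nlinarith
  have hspread : (δ ^ 2 + 1) * (r i - r k) ≤ (δ ^ 2 - 1) * (ε * r k) := by
    nlinarith [hlow' i k, hupp' k i, mul_le_mul_of_nonneg_left hab hδ2,
      mul_le_mul_of_nonneg_left (ha_le k) (mul_nonneg hδ2 hε)]
  rw [mul_assoc, div_mul_eq_mul_div, le_div_iff₀ (by positivity)]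
  linarith

end RatioSpread

theorem exists_pos_eq_smul_of_forall_ratioSpreadLE {ι : Type*} [Nonempty ι] {u v : ι → ℝ}
    (hv : ∀ i, 0 < v i) {ε : ℕ → ℝ} (hε : Tendsto ε atTop (𝓝 0))
    (h : ∀ n, RatioSpreadLE (ε n) u v) : ∃ c : ℝ, 0 < c ∧ u = c • v := by
  obtain ⟨k⟩ := ‹Nonempty ι›
  set r := fun i => u i / v i with hr
  have hr_mem : ∀ n, ∃ a b, 0 < a ∧ (∀ i, a ≤ r i ∧ r i ≤ b) ∧ b - a ≤ ε n * a := fun n => by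
    obtain ⟨a, b, ha, hlow, hupp, hab⟩ := h n
    exact ⟨a, b, ha, fun i => ⟨(le_div_iff₀ (hv i)).2 (hlow i), (div_le_iff₀ (hv i)).2 (hupp i)⟩,
      hab⟩
  have hclose : ∀ i n, |r i - r k| ≤ ε n * r k := fun i n => by
    obtain ⟨a, b, ha, hr_ab, hab⟩ := hr_mem n
    have hεn : 0 ≤ ε n := by nlinarith [hr_ab k]
    rw [abs_sub_le_iff]
    constructor <;>
      linarith [hr_ab i, hr_ab k, mul_le_mul_of_nonneg_left (hr_ab k).1 hεn]
  have hconst : ∀ i, r i = r k := fun i => by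
    have hlim : Tendsto (fun n => ε n * r k) atTop (𝓝 0) := by simpa using hε.mul_const (r k)
    exact sub_eq_zero.1 (abs_nonpos_iff.1 (ge_of_tendsto' hlim (hclose i)))
  obtain ⟨a, _, ha, hr_ab, -⟩ := hr_mem 0
  refine ⟨r k, ha.trans_le (hr_ab k).1, funext fun i => ?_⟩
  rw [Pi.smul_apply, smul_eq_mul, ← hconst i, hr, div_mul_cancel₀ _ (hv i).ne']

section VeechProd

variable {m : ℕ} {B : Matrix (Fin m) (Fin m) ℝ}

theorem veechProd_succ_eq_mul (U : ℕ → Matrix (Fin m) (Fin m) ℝ) (n : ℕ) :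
    veechProd B U (n + 1) = B * U 0 * veechProd B (fun k => U (k + 1)) n := by
  induction n with
  | zero => rfl
  | succ n ih => rw [veechProd.eq_2, ih, veechProd.eq_2]; simp only [Matrix.mul_assoc]

theorem veechProd_mulVec_nonneg (hB : ∀ i j, 0 ≤ B i j) {U : ℕ → Matrix (Fin m) (Fin m) ℝ}
    (hU : ∀ n i j, 0 ≤ U n i j) (n : ℕ) {y : Fin m → ℝ} (hy : 0 ≤ y) :
    0 ≤ veechProd B U n *ᵥ y := by
  induction n generalizing y with
  | zero => exact mulVec_nonneg_of_nonneg hB hy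
  | succ n ih =>
    rw [veechProd, ← mulVec_mulVec, ← mulVec_mulVec]
    exact ih (mulVec_nonneg_of_nonneg (hU n) (mulVec_nonneg_of_nonneg hB hy))

theorem ratioSpreadLE_veechProd_mulVec {δ : ℝ} (hδ : 1 ≤ δ) (hB : ∀ i j, 0 < B i j)
    (hBδ : ∀ i j k, B i j ≤ δ * B k j) (n : ℕ) {U : ℕ → Matrix (Fin m) (Fin m) ℝ}
    (hU : ∀ n i j, 0 ≤ U n i j) {x y : Fin m → ℝ} (hx : 0 ≤ x) (hy : 0 ≤ y)
    (hx0 : veechProd B U n *ᵥ x ≠ 0) (hy0 : veechProd B U n *ᵥ y ≠ 0) :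
    RatioSpreadLE (((δ ^ 2 - 1) / (δ ^ 2 + 1)) ^ n * (δ ^ 2 - 1))
      (veechProd B U n *ᵥ x) (veechProd B U n *ᵥ y) := by
  induction n generalizing U with
  | zero =>
    simpa only [veechProd, pow_zero, one_mul] using ratioSpreadLE_mulVec hB hBδ hx hy
      (ne_zero_of_mulVec_ne_zero hx0) (ne_zero_of_mulVec_ne_zero hy0)
  | succ n ih =>
    simp only [veechProd_succ_eq_mul, ← mulVec_mulVec] at hx0 hy0 ⊢
    have hUPy : 0 ≤ U 0 *ᵥ (veechProd B (fun k => U (k + 1)) n *ᵥ y) :=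
      mulVec_nonneg_of_nonneg (hU 0)
        (veechProd_mulVec_nonneg (fun i j => (hB i j).le) (fun k => hU (k + 1)) n hy)
    have hδ2 : 0 ≤ δ ^ 2 - 1 := by nlinarith
    have hε : 0 ≤ ((δ ^ 2 - 1) / (δ ^ 2 + 1)) ^ n * (δ ^ 2 - 1) :=
      mul_nonneg (pow_nonneg (div_nonneg hδ2 (by positivity)) n) hδ2
    have := ((ih (fun k => hU (k + 1))
      (ne_zero_of_mulVec_ne_zero (ne_zero_of_mulVec_ne_zero hx0))
      (ne_zero_of_mulVec_ne_zero (ne_zero_of_mulVec_ne_zero hy0))).mulVec_of_nonneg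
      (hU 0)).mulVec_contract hδ hB hBδ hε hUPy (ne_zero_of_mulVec_ne_zero hy0)
    convert this using 1
    ring

end VeechProd

theorem veech_intersection_single_ray_general (m : ℕ) (δ : ℝ)
    (B : Matrix (Fin m) (Fin m) ℝ)
    (hBpos : ∀ i j, 0 < B i j)
    (hBbound : ∀ i j k, B i j ≤ δ * B i k ∧ B i j ≤ δ * B k j)
    (U : ℕ → Matrix (Fin m) (Fin m) ℝ)
    (hU : ∀ n i j, 0 ≤ U n i j) :
    ∀ u ∈ ⋂ n : ℕ, (veechProd B U n).mulVec ''
        {x : Fin m → ℝ | ∀ i, 0 ≤ x i},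
      ∀ v ∈ ⋂ n : ℕ, (veechProd B U n).mulVec ''
          {x : Fin m → ℝ | ∀ i, 0 ≤ x i},
        u ≠ 0 → v ≠ 0 → ∃ lam : ℝ, 0 < lam ∧ u = lam • v := by
  intro u hu v hv hu0 hv0
  simp only [Set.mem_iInter, Set.mem_image] at hu hv
  obtain ⟨i₀, -⟩ := Function.ne_iff.mp hv0
  have : Nonempty (Fin m) := ⟨i₀⟩
  have hδ : 1 ≤ δ := le_of_mul_le_mul_right (by rw [one_mul]; exact (hBbound i₀ i₀ i₀).1)
    (hBpos i₀ i₀)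
  have hBδ : ∀ i j k, B i j ≤ δ * B k j := fun i j k => (hBbound i j k).2
  have hvpos : ∀ i, 0 < v i := by
    obtain ⟨y, hy, rfl⟩ := hv 0
    exact mulVec_apply_pos hBpos hy (ne_zero_of_mulVec_ne_zero hv0)
  have hrate : (δ ^ 2 - 1) / (δ ^ 2 + 1) < 1 := (div_lt_one (by positivity)).2 (by linarith)
  have hrate0 : 0 ≤ (δ ^ 2 - 1) / (δ ^ 2 + 1) := div_nonneg (by nlinarith) (by positivity)
  refine exists_pos_eq_smul_of_forall_ratioSpreadLE hvpos
    (by simpa using (tendsto_pow_atTop_nhds_zero_of_lt_one hrate0 hrate).mul_const (δ ^ 2 - 1))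
    fun n => ?_
  obtain ⟨x, hx, rfl⟩ := hu n
  obtain ⟨y, hy, rfl⟩ := hv n
  exact ratioSpreadLE_veechProd_mulVec hδ hBpos hBδ n hU hx hy hu0 hv0

/-- **Veech's lemma.** Let `δ > 0` and let `B` be an `m × m`
positive real matrix that is `δ`-bounded, i.e. `B_{ij} ≤ δ·B_{ik}` and
`B_{ij} ≤ δ·B_{kj}` for all `i, j, k`.  For each `i` let `U_i` be a
nonnegative `m × m` matrix.  Then the intersection
`⋂_i B U_1 B U_2 ⋯ B U_i B (Λ^m)`, where `Λ^m` is the nonnegative cone of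
`ℝ^m`, is contained in a single ray: any two nonzero elements `u, v` of this
intersection satisfy `u = λ • v` for some `λ > 0`. -/
theorem veech_intersection_single_ray (m : ℕ) (δ : ℝ) (hδ : 0 < δ)
    (B : Matrix (Fin m) (Fin m) ℝ)
    (hBpos : ∀ i j, 0 < B i j)
    (hBbound : ∀ i j k, B i j ≤ δ * B i k ∧ B i j ≤ δ * B k j)
    (U : ℕ → Matrix (Fin m) (Fin m) ℝ)
    (hU : ∀ n i j, 0 ≤ U n i j) :
    ∀ u ∈ ⋂ n : ℕ, (veechProd B U n).mulVec ''
        {x : Fin m → ℝ | ∀ i, 0 ≤ x i},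
      ∀ v ∈ ⋂ n : ℕ, (veechProd B U n).mulVec ''
          {x : Fin m → ℝ | ∀ i, 0 ≤ x i},
        u ≠ 0 → v ≠ 0 → ∃ lam : ℝ, 0 < lam ∧ u = lam • v :=
  veech_intersection_single_ray_general m δ B hBpos hBbound U hU
end

section
/- Let ℬ be a collection of subsets of a set Y satisfying: (1) Y ∈ ℬ; (2) for each A ∈ ℬ, the complement Y \ A is a finite union of elements of ℬ; (3) any two elements of ℬ are disjoint or nested. Then the collection of finite unions of elements of ℬ is an algebra of sets on Y, and each of its members is a finite disjoint union of elements of ℬ. -/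
/-!
Two members of `B` meet in `∅` or in the smaller of them, so the finite unions of members of `B`
are closed under intersection; since `Y ∈ B` and complements of members of `B` are finite unions,
complementing `⋃ Aᵢ` as `⋂ Aᵢᶜ` stays among finite unions. Finally, in a finite family of sets any
two of which are disjoint or nested, the maximal members are pairwise disjoint and cover the
family.
-/

section TreeBasis

open Set

variable {Y : Type*}

def finiteUnions (B : Set (Set Y)) : Set (Set Y) :=
  {A | ∃ S : Finset (Set Y), ↑S ⊆ B ∧ A = ⋃₀ ↑S}

variable {B : Set (Set Y)} {A C : Set Y}

theorem empty_mem_finiteUnions (B : Set (Set Y)) : ∅ ∈ finiteUnions B :=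
  ⟨∅, by simp, by simp⟩

theorem mem_finiteUnions_of_mem (hA : A ∈ B) : A ∈ finiteUnions B :=
  ⟨{A}, by simpa using hA, by simp⟩

theorem union_mem_finiteUnions (hA : A ∈ finiteUnions B)
    (hC : C ∈ finiteUnions B) : A ∪ C ∈ finiteUnions B := by
  classical
  obtain ⟨S, hSB, rfl⟩ := hA
  obtain ⟨T, hTB, rfl⟩ := hC
  exact ⟨S ∪ T, by simpa using union_subset hSB hTB, by simp [sUnion_union]⟩

theorem inter_mem_finiteUnions_of_nested
    (hnest : ∀ A ∈ B, ∀ C ∈ B, Disjoint A C ∨ A ⊆ C ∨ C ⊆ A)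
    (hA : A ∈ finiteUnions B) (hC : C ∈ finiteUnions B) : A ∩ C ∈ finiteUnions B := by
  classical
  obtain ⟨S, hSB, rfl⟩ := hA
  obtain ⟨T, hTB, rfl⟩ := hC
  refine ⟨S.filter (fun a => ∃ c ∈ T, a ⊆ c) ∪ T.filter (fun c => ∃ a ∈ S, c ⊆ a), ?_, ?_⟩
  · rw [Finset.coe_union, Finset.coe_filter, Finset.coe_filter]
    exact union_subset (fun a ha => hSB ha.1) (fun c hc => hTB hc.1)
  · ext x
    simp only [mem_inter_iff, mem_sUnion, Finset.coe_union, Finset.coe_filter, mem_union,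
      Finset.mem_coe]
    constructor
    · rintro ⟨⟨a, ha, hxa⟩, c, hc, hxc⟩
      rcases hnest a (hSB ha) c (hTB hc) with hac | hac | hca
      · exact (disjoint_left.1 hac hxa hxc).elim
      · exact ⟨a, Or.inl ⟨ha, c, hc, hac⟩, hxa⟩
      · exact ⟨c, Or.inr ⟨hc, a, ha, hca⟩, hxc⟩
    · rintro ⟨t, ⟨ht, c, hc, htc⟩ | ⟨ht, a, ha, hta⟩, hxt⟩
      · exact ⟨⟨t, ht, hxt⟩, c, hc, htc hxt⟩
      · exact ⟨⟨a, ha, hta hxt⟩, t, ht, hxt⟩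

theorem compl_mem_finiteUnions_of_nested (huniv : univ ∈ B)
    (hcompl : ∀ A ∈ B, Aᶜ ∈ finiteUnions B)
    (hnest : ∀ A ∈ B, ∀ C ∈ B, Disjoint A C ∨ A ⊆ C ∨ C ⊆ A)
    (hA : A ∈ finiteUnions B) : Aᶜ ∈ finiteUnions B := by
  classical
  obtain ⟨S, hSB, rfl⟩ := hA
  induction S using Finset.induction_on with
  | empty => simpa using mem_finiteUnions_of_mem huniv
  | insert a S _ ih =>
    rw [Finset.coe_insert, insert_subset_iff] at hSB
    rw [Finset.coe_insert, sUnion_insert, compl_union]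
    exact inter_mem_finiteUnions_of_nested hnest (hcompl a hSB.1) (ih hSB.2)

theorem Finset.exists_subset_pairwise_disjoint_sUnion_eq {S : Finset (Set Y)}
    (hS : (S : Set (Set Y)).Pairwise fun A C => Disjoint A C ∨ A ⊆ C ∨ C ⊆ A) :
    ∃ T ⊆ S, (T : Set (Set Y)).Pairwise Disjoint ∧ ⋃₀ (T : Set (Set Y)) = ⋃₀ ↑S := by
  classical
  refine ⟨S.filter (Maximal (· ∈ (S : Set (Set Y)))), Finset.filter_subset _ _, ?_, ?_⟩
  · intro A hA C hC hAC
    rw [Finset.coe_filter] at hA hC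
    rcases hS hA.1 hC.1 hAC with hdisj | hle | hle
    · exact hdisj
    · exact absurd (hle.antisymm (hA.2.2 hC.1 hle)) hAC
    · exact absurd ((hC.2.2 hA.1 hle).antisymm hle) hAC
  · refine subset_antisymm
      (sUnion_subset_sUnion (Finset.coe_subset.2 (Finset.filter_subset _ _))) ?_
    rintro x ⟨A, hA, hxA⟩
    obtain ⟨M, hAM, hM⟩ := S.finite_toSet.exists_le_maximal hA
    exact ⟨M, by simpa using ⟨hM.1, hM⟩, hAM hxA⟩

end TreeBasis

/-- Let `ℬ` be a collection of subsets of `Y` such that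
(1) `Y ∈ ℬ`; (2) the complement of each element of `ℬ` is a finite union of
elements of `ℬ`; (3) any two elements of `ℬ` are disjoint or nested.  Then
the collection of finite unions of elements of `ℬ` is an algebra of sets on
`Y` (contains `∅`, closed under complements and finite unions), and each of
its members is a finite disjoint union of elements of `ℬ`. -/
theorem finite_unions_of_tree_basis_form_algebra {Y : Type*}
    (B : Set (Set Y)) (huniv : Set.univ ∈ B)
    (hcompl : ∀ A ∈ B, ∃ S : Finset (Set Y), ↑S ⊆ B ∧ Aᶜ = ⋃₀ ↑S)
    (hnest : ∀ A ∈ B, ∀ C ∈ B, Disjoint A C ∨ A ⊆ C ∨ C ⊆ A) :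
    (∅ ∈ {A : Set Y | ∃ S : Finset (Set Y), ↑S ⊆ B ∧ A = ⋃₀ ↑S}) ∧
    (∀ A ∈ {A : Set Y | ∃ S : Finset (Set Y), ↑S ⊆ B ∧ A = ⋃₀ ↑S},
      Aᶜ ∈ {A : Set Y | ∃ S : Finset (Set Y), ↑S ⊆ B ∧ A = ⋃₀ ↑S}) ∧
    (∀ A ∈ {A : Set Y | ∃ S : Finset (Set Y), ↑S ⊆ B ∧ A = ⋃₀ ↑S},
      ∀ C ∈ {A : Set Y | ∃ S : Finset (Set Y), ↑S ⊆ B ∧ A = ⋃₀ ↑S},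
        A ∪ C ∈ {A : Set Y | ∃ S : Finset (Set Y), ↑S ⊆ B ∧ A = ⋃₀ ↑S}) ∧
    (∀ A ∈ {A : Set Y | ∃ S : Finset (Set Y), ↑S ⊆ B ∧ A = ⋃₀ ↑S},
      ∃ S : Finset (Set Y), ↑S ⊆ B ∧
        (↑S : Set (Set Y)).Pairwise Disjoint ∧ A = ⋃₀ ↑S) := by
  refine ⟨empty_mem_finiteUnions B,
    fun A hA => compl_mem_finiteUnions_of_nested huniv hcompl hnest hA,
    fun A hA C hC => union_mem_finiteUnions hA hC, ?_⟩
  rintro A ⟨S, hSB, rfl⟩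
  obtain ⟨T, hTS, hT, hTS_sUnion⟩ := S.exists_subset_pairwise_disjoint_sUnion_eq
    fun A hA C hC _ => hnest A (hSB hA) C (hSB hC)
  exact ⟨T, (Finset.coe_subset.2 hTS).trans hSB, hT, hTS_sUnion.symm⟩
end
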